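/- Every sequential type is inhabited: for every sequential type τ and every context Γ, the closed term ⊥_τ satisfies Γ ⊢ ⊥_τ : τ. -/

import Mathlib

/-- Terms of the sequential λ-calculus in de Bruijn representation
(so terms are automatically identified up to α-equivalence):
nil `*`, variable prefix `x.M`, push/application `[N].M`,
and pop/abstraction `<x>.M`. -/
inductive STm : Type
  | star : STm
  | var  : Nat → STm → STm
  | push : STm → STm → STm
  | pop  : STm → STm

namespace STm

/-- Lifting of a renaming under a binder. -/
def liftF (f : Nat → Nat) : Nat → Nat
  | 0 => 0
  | n+1 => f n + 1

/-- Renaming of de Bruijn indices. -/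
def rename (f : Nat → Nat) : STm → STm
  | star => star
  | var n M => var (f n) (rename f M)
  | push N M => push (rename f N) (rename f M)
  | pop M => pop (rename (liftF f) M)

/-- Capture-avoiding composition `N ; M`. -/
def comp : STm → STm → STm
  | star, P => P
  | var n N, P => var n (comp N P)
  | push Q N, P => push Q (comp N P)
  | pop N, P => pop (comp N (rename Nat.succ P))

/-- Lifting of a substitution under a binder. -/
def liftS (σ : Nat → STm) : Nat → STm
  | 0 => var 0 star
  | n+1 => rename Nat.succ (σ n)

/-- Capture-avoiding simultaneous substitution; note
`{N/x}(x.M) = N ; {N/x}M`. -/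
def subst (σ : Nat → STm) : STm → STm
  | star => star
  | var n M => comp (σ n) (subst σ M)
  | push N M => push (subst σ N) (subst σ M)
  | pop M => pop (subst (liftS σ) M)

/-- Capture-avoiding substitution `{N/x}M` of `N` for the variable bound
immediately outside `M`. -/
def subst1 (N : STm) : STm → STm :=
  subst (fun n => match n with | 0 => N | n+1 => var n star)

end STm

/-- Machine states: a stack of terms (written bottom-first, so the top
element is the last element of the list) together with a term. -/
abbrev SState := List STm × STm

/-- The transitions of the sequential stack machine:
`(S, [N].M) → (S·N, M)` and `(S·N, <x>.M) → (S, {N/x}M)`. -/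
inductive SMStep : SState → SState → Prop
  | push (S : List STm) (N M : STm) : SMStep (S, .push N M) (S ++ [N], M)
  | pop (S : List STm) (N M : STm) : SMStep (S ++ [N], .pop M) (S, STm.subst1 N M)

/-- A run of the sequential machine: a finite sequence of transitions. -/
def SRun : SState → SState → Prop := Relation.ReflTransGen SMStep

/-- Sequential types `ρ_n…ρ_1 ⟹ τ_1…τ_m`: an implication between two
finite vectors of sequential types. The first list is the input vector
as written (i.e. `arr (rev ρ⃗) τ⃗` represents `rev(ρ⃗) ⟹ τ⃗`). -/
inductive STy : Type
  | arr : List STy → List STy → STy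

/-- Typing judgments `Γ ⊢ M : τ` of the sequential λ-calculus, with the
context `Γ` a finite map from (de Bruijn) variables to types, given as a
list. -/
inductive Typing : List STy → STm → STy → Prop
  | star (Γ : List STy) (τs : List STy) :
      Typing Γ .star (.arr τs.reverse τs)
  | var (Γ : List STy) (n : Nat) (M : STm) (ρs σs τs υs : List STy) :
      Γ[n]? = some (.arr ρs.reverse σs) →
      Typing Γ M (.arr (σs.reverse ++ τs.reverse) υs) →
      Typing Γ (.var n M) (.arr (ρs.reverse ++ τs.reverse) υs)
  | abs (Γ : List STy) (M : STm) (ρ : STy) (σs τs : List STy) :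
      Typing (ρ :: Γ) M (.arr σs.reverse τs) →
      Typing Γ (.pop M) (.arr (ρ :: σs.reverse) τs)
  | app (Γ : List STy) (N M : STm) (ρ : STy) (σs τs : List STy) :
      Typing Γ N ρ →
      Typing Γ M (.arr (ρ :: σs.reverse) τs) →
      Typing Γ (.push N M) (.arr σs.reverse τs)

/-- Iterated abstraction `<x_n>.….<x_1>.M`. -/
def popsN : Nat → STm → STm
  | 0, M => M
  | k+1, M => .pop (popsN k M)

mutual
/-- The canonical inhabitant `⊥_τ` of a sequential type:
for `τ = σ_n…σ_1 ⟹ τ_1…τ_m`,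
`⊥_τ = <x_n>.….<x_1>.[⊥_{τ_1}].….[⊥_{τ_m}].*`. -/
def botTm : STy → STm
  | .arr ins outs => popsN ins.length (botList outs)
/-- The sequence of pushes `[⊥_{τ_1}].….[⊥_{τ_m}].*`. -/
def botList : List STy → STm
  | [] => .star
  | τ :: τs => .push (botTm τ) (botList τs)
end

theorem typing_popsN {Γ ins σs outs : List STy} {M : STm}
    (h : Typing (ins.reverse ++ Γ) M (.arr σs outs)) :
    Typing Γ (popsN ins.length M) (.arr (ins ++ σs) outs) := by
  induction ins generalizing Γ with
  | nil => exact h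
  | cons ρ ins ih =>
    have hρ := Typing.abs Γ _ ρ (ins ++ σs).reverse outs
      (by simpa using ih (Γ := ρ :: Γ) (by simpa using h))
    rwa [List.reverse_reverse] at hρ

theorem typing_botList {Γ τs : List STy} (h : ∀ τ ∈ τs, Typing Γ (botTm τ) τ)
    (ρs : List STy) : Typing Γ (botList τs) (.arr ρs.reverse (ρs ++ τs)) := by
  induction τs generalizing ρs with
  | nil => simpa [botList] using Typing.star Γ ρs
  | cons τ τs ih =>
    have hτs := ih (fun τ' hτ' => h τ' (List.mem_cons_of_mem τ hτ')) (ρs ++ [τ])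
    exact Typing.app Γ _ _ τ ρs _ (h τ List.mem_cons_self) (by simpa using hτs)

theorem seq_bot_typed (τ : STy) (Γ : List STy) : Typing Γ (botTm τ) τ :=
  match τ with
  | .arr ins outs => by
    have hbody :=
      typing_botList (τs := outs) (fun τ _ => seq_bot_typed τ (ins.reverse ++ Γ)) []
    simpa [botTm] using typing_popsN (σs := []) hbody
termination_by τ
decreasing_by
  have := List.sizeOf_lt_of_mem ‹τ ∈ outs›
  simp only [STy.arr.sizeOf_spec]
  omega
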